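/- Fix n and partition ℍ_n (vectors r ∈ ℕ^d with |r| = n) into sets 𝔸_t = {r ∈ ℍ_n : r₁ ∈ I_t}, where I₁, …, I_q partition {0,1,…,n} into q intervals. Let F_t = Σ_{r ∈ 𝔸_t} f_r with f_r r-functions, and Ψ = ∏_{t=1}^q (1 + ρ̃ F_t). Then ∫_{[0,1]^d} Ψ dx = 1. -/

import Mathlib

open MeasureTheory Set

/-- The dyadic interval `[j·2^k, (j+1)·2^k)`. -/
noncomputable def dyadicI (j k : ℤ) : Set ℝ :=
  Set.Ico ((j : ℝ) * 2 ^ k) (((j : ℝ) + 1) * 2 ^ k)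

/-- The left half of the dyadic interval `[j·2^k, (j+1)·2^k)`. -/
noncomputable def dyadicLeft (j k : ℤ) : Set ℝ :=
  Set.Ico ((j : ℝ) * 2 ^ k) ((j : ℝ) * 2 ^ k + 2 ^ (k - 1))

/-- The right half of the dyadic interval `[j·2^k, (j+1)·2^k)`. -/
noncomputable def dyadicRight (j k : ℤ) : Set ℝ :=
  Set.Ico ((j : ℝ) * 2 ^ k + 2 ^ (k - 1)) (((j : ℝ) + 1) * 2 ^ k)

/-- The `L^∞`-normalized Haar function of the dyadic interval `[j·2^k, (j+1)·2^k)`: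
`h_I = -𝟙_{I_left} + 𝟙_{I_right}`. -/
noncomputable def haar (j k : ℤ) (x : ℝ) : ℝ :=
  - (dyadicLeft j k).indicator (fun _ => (1 : ℝ)) x
  + (dyadicRight j k).indicator (fun _ => (1 : ℝ)) x

/-- The set `ℍ_n` of vectors `r ∈ ℕ^d` with `∑ r_t = n`, as a finset. -/
def Hset (d n : ℕ) : Finset (Fin d → ℕ) :=
  (Fintype.piFinset fun _ : Fin d => Finset.range (n + 1)).filter fun r => ∑ t, r t = n

/-!
Expanding the product, `∫ Ψ` is `1` plus integrals of `∏_{t ∈ T} ρ F_t` over nonempty sets of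
blocks `T`, and these expand further into integrals of `∏_{t ∈ T} f_{r_t}` with `r_t ∈ 𝔸_t`.
The first coordinates `r_{t,1}` lie in the disjoint intervals `I_t`, hence are distinct, so in the
first variable the factor of finest scale is a Haar function on whose support all the other factors
are constant, and the integral vanishes.
-/

lemma mem_dyadicI_iff_floor {j k : ℤ} {x : ℝ} : x ∈ dyadicI j k ↔ ⌊x / 2 ^ k⌋ = j := by
  have h : (0 : ℝ) < 2 ^ k := by positivity
  rw [Int.floor_eq_iff, le_div_iff₀ h, div_lt_iff₀ h]
  rfl

lemma floor_div_two_zpow_of_le {k k' : ℤ} (h : k ≤ k') (x : ℝ) :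
    ⌊x / 2 ^ k'⌋ = ⌊x / 2 ^ k⌋ / 2 ^ (k' - k).toNat := by
  have hpow : (2 : ℝ) ^ k' = 2 ^ k * ((2 ^ (k' - k).toNat : ℕ) : ℝ) := by
    rw [Nat.cast_pow, Nat.cast_ofNat, ← zpow_natCast, Int.toNat_of_nonneg (by omega),
      ← zpow_add₀ two_ne_zero, add_sub_cancel]
  rw [hpow, ← div_div, Int.floor_div_natCast, Nat.cast_pow, Nat.cast_ofNat]

lemma mem_dyadicI_congr {j j' k k' : ℤ} (h : k ≤ k') {x y : ℝ} (hx : x ∈ dyadicI j k)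
    (hy : y ∈ dyadicI j k) : x ∈ dyadicI j' k' ↔ y ∈ dyadicI j' k' := by
  rw [mem_dyadicI_iff_floor] at hx hy ⊢
  rw [mem_dyadicI_iff_floor, floor_div_two_zpow_of_le h, floor_div_two_zpow_of_le h, hx, hy]

lemma dyadicLeft_eq (j k : ℤ) : dyadicLeft j k = dyadicI (2 * j) (k - 1) := by
  have h : (2 : ℝ) ^ k = 2 ^ (k - 1) * 2 := by rw [← zpow_add_one₀ two_ne_zero, sub_add_cancel]
  rw [dyadicLeft, dyadicI, h]
  push_cast
  ring_nf

lemma dyadicRight_eq (j k : ℤ) : dyadicRight j k = dyadicI (2 * j + 1) (k - 1) := by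
  have h : (2 : ℝ) ^ k = 2 ^ (k - 1) * 2 := by rw [← zpow_add_one₀ two_ne_zero, sub_add_cancel]
  rw [dyadicRight, dyadicI, h]
  push_cast
  ring_nf

lemma haar_eq_of_mem_dyadicI {j j' k k' : ℤ} (h : k < k') {x y : ℝ} (hx : x ∈ dyadicI j k)
    (hy : y ∈ dyadicI j k) : haar j' k' x = haar j' k' y := by
  have hk : k ≤ k' - 1 := by omega
  classical
  simp only [haar, dyadicLeft_eq, dyadicRight_eq, Set.indicator_apply,
    mem_dyadicI_congr (j' := 2 * j') hk hx hy, mem_dyadicI_congr (j' := 2 * j' + 1) hk hx hy]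

lemma haar_eq_zero_of_notMem {j k : ℤ} {x : ℝ} (hx : x ∉ dyadicI j k) : haar j k x = 0 := by
  have h : (0 : ℝ) < 2 ^ (k - 1) := by positivity
  have h' : (2 : ℝ) ^ k = 2 ^ (k - 1) * 2 := by rw [← zpow_add_one₀ two_ne_zero, sub_add_cancel]
  have hL : x ∉ dyadicLeft j k := fun ⟨h1, h2⟩ => hx ⟨h1, by linarith⟩
  have hR : x ∉ dyadicRight j k := fun ⟨h1, h2⟩ => hx ⟨by linarith, h2⟩
  simp [haar, hL, hR]

lemma measurable_haar (j k : ℤ) : Measurable (haar j k) :=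
  ((measurable_const.indicator measurableSet_Ico).neg).add
    (measurable_const.indicator measurableSet_Ico)

lemma abs_haar_le_one (j k : ℤ) (x : ℝ) : |haar j k x| ≤ 1 := by
  unfold haar
  by_cases hL : x ∈ dyadicLeft j k <;> by_cases hR : x ∈ dyadicRight j k <;> simp [hL, hR]

lemma integral_haar (j k : ℤ) : ∫ x, haar j k x = 0 := by
  have hint : ∀ a b : ℝ, Integrable ((Ico a b).indicator fun _ => (1 : ℝ)) :=
    fun _ _ => (integrable_indicator_iff measurableSet_Ico).2
      (integrableOn_const measure_Ico_lt_top.ne)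
  have h : (0 : ℝ) < 2 ^ (k - 1) := by positivity
  have h' : (2 : ℝ) ^ k = 2 ^ (k - 1) * 2 := by rw [← zpow_add_one₀ two_ne_zero, sub_add_cancel]
  simp only [haar, dyadicLeft, dyadicRight, neg_add_eq_sub]
  rw [integral_sub (hint _ _) (hint _ _),
    integral_indicator_const _ measurableSet_Ico, integral_indicator_const _ measurableSet_Ico,
    Real.volume_real_Ico_of_le (by linarith), Real.volume_real_Ico_of_le (by linarith), h']
  ring

lemma setIntegral_haar_eq_zero {j k : ℤ} {S : Set ℝ} (hS : dyadicI j k ⊆ S) :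
    ∫ x in S, haar j k x = 0 := by
  rw [setIntegral_eq_integral_of_forall_compl_eq_zero
    fun x hx => haar_eq_zero_of_notMem fun h => hx (hS h), integral_haar]

/-- The factor at the finest scale has mean zero on its dyadic interval, on which all the coarser
factors are constant. -/
lemma setIntegral_prod_haar_eq_zero {ι : Type*} {T : Finset ι} (hT : T.Nonempty) {a k : ι → ℤ}
    (hk : InjOn k T) {S : Set ℝ} (hS : ∀ t ∈ T, dyadicI (a t) (k t) ⊆ S) :
    ∫ x in S, ∏ t ∈ T, haar (a t) (k t) x = 0 := by
  classical
  obtain ⟨t₀, ht₀, hmin⟩ := T.exists_min_image k hT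
  set x₀ : ℝ := (a t₀ : ℝ) * 2 ^ k t₀
  have hx₀ : x₀ ∈ dyadicI (a t₀) (k t₀) := by
    have : (0 : ℝ) < 2 ^ k t₀ := by positivity
    exact ⟨le_rfl, by linarith⟩
  have hfactor : ∀ x, ∏ t ∈ T, haar (a t) (k t) x =
      (∏ t ∈ T.erase t₀, haar (a t) (k t) x₀) * haar (a t₀) (k t₀) x := by
    intro x
    by_cases hx : x ∈ dyadicI (a t₀) (k t₀)
    · rw [← Finset.prod_erase_mul T _ ht₀]
      congr 1
      refine Finset.prod_congr rfl fun t ht => haar_eq_of_mem_dyadicI ?_ hx hx₀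
      exact lt_of_le_of_ne (hmin t (Finset.mem_of_mem_erase ht))
        fun h => Finset.ne_of_mem_erase ht (hk ht₀ (Finset.mem_of_mem_erase ht) h).symm
    · rw [haar_eq_zero_of_notMem hx, mul_zero, Finset.prod_eq_zero ht₀ (haar_eq_zero_of_notMem hx)]
  simp_rw [hfactor]
  rw [integral_const_mul, setIntegral_haar_eq_zero (hS t₀ ht₀), mul_zero]

lemma setIntegral_univ_pi_prod {ι : Type*} [Fintype ι] {E : ι → Type*} [∀ i, MeasureSpace (E i)]
    [∀ i, SigmaFinite (volume : Measure (E i))] (s : ∀ i, Set (E i)) (g : ∀ i, E i → ℝ) :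
    ∫ x in univ.pi s, ∏ i, g i (x i) = ∏ i, ∫ y in s i, g i y := by
  rw [volume_pi, Measure.restrict_pi_pi, integral_fintype_prod_eq_prod]

instance isProbabilityMeasure_restrict_unitCube {ι : Type*} [Fintype ι] :
    IsProbabilityMeasure (volume.restrict (univ.pi fun _ : ι => Ico (0 : ℝ) 1)) :=
  ⟨by simp [volume_pi_pi]⟩

lemma memLp_top_finset_prod {ι Ω : Type*} [MeasurableSpace Ω] {μ : Measure Ω} {s : Finset ι}
    {f : ι → Ω → ℝ} (hf : ∀ i ∈ s, MemLp (f i) ⊤ μ) : MemLp (fun x => ∏ i ∈ s, f i x) ⊤ μ := by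
  simpa using MemLp.prod' hf

lemma integral_prod_one_add_eq_one {ι Ω : Type*} [MeasurableSpace Ω] {μ : Measure Ω}
    [IsProbabilityMeasure μ] (s : Finset ι) (G : ι → Ω → ℝ) (hG : ∀ i ∈ s, MemLp (G i) ⊤ μ)
    (hzero : ∀ T ⊆ s, T.Nonempty → ∫ x, ∏ i ∈ T, G i x ∂μ = 0) :
    ∫ x, ∏ i ∈ s, (1 + G i x) ∂μ = 1 := by
  classical
  simp_rw [Finset.prod_one_add]
  rw [integral_finsetSum _ fun T hT =>
    (memLp_top_finset_prod fun i hi => hG i (Finset.mem_powerset.1 hT hi)).integrable le_top]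
  rw [Finset.sum_eq_single ∅ (fun T hT hne => hzero T (Finset.mem_powerset.1 hT)
    (Finset.nonempty_iff_ne_empty.2 hne)) (fun h => absurd (Finset.empty_mem_powerset s) h)]
  simp

lemma integral_prod_sum_eq_zero {ι κ Ω : Type*} [Fintype ι] [DecidableEq ι] [MeasurableSpace Ω]
    {μ : Measure Ω} [IsFiniteMeasure μ] (A : ι → Finset κ) (φ : κ → Ω → ℝ)
    (hφ : ∀ p, MemLp (φ p) ⊤ μ)
    (hzero : ∀ γ ∈ Fintype.piFinset A, ∫ x, ∏ t, φ (γ t) x ∂μ = 0) :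
    ∫ x, ∏ t, ∑ p ∈ A t, φ p x ∂μ = 0 := by
  simp_rw [Finset.prod_univ_sum]
  rw [integral_finsetSum _ fun γ _ =>
    (memLp_top_finset_prod fun t _ => hφ (γ t)).integrable le_top]
  exact Finset.sum_eq_zero hzero

lemma MonotoneOn.eq_of_mem_Ico_succ {c : ℕ → ℕ} {q : ℕ} (hc : MonotoneOn c (Iic q))
    {t t' x : ℕ} (ht : t < q) (ht' : t' < q) (hx : x ∈ Ico (c t) (c (t + 1)))
    (hx' : x ∈ Ico (c t') (c (t' + 1))) : t = t' := by
  by_contra hne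
  wlog h : t < t' generalizing t t'
  · exact this ht' ht hx' hx (Ne.symm hne) (by omega)
  have := hc (show t + 1 ∈ Iic q by simp; omega) (show t' ∈ Iic q by simp; omega) h
  simp only [mem_Ico] at hx hx'
  omega

/-- `h_R` for the dyadic box `R = ∏ᵢ [aᵢ 2^{-rᵢ}, (aᵢ + 1) 2^{-rᵢ})`. -/
noncomputable def haarTensor {d : ℕ} (r : Fin d → ℕ) (a : ∀ i, Fin (2 ^ r i)) (x : Fin d → ℝ) : ℝ :=
  ∏ i, haar ((a i : ℕ) : ℤ) (-(r i : ℤ)) (x i)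

lemma memLp_top_haarTensor {d : ℕ} {μ : Measure (Fin d → ℝ)} (r : Fin d → ℕ)
    (a : ∀ i, Fin (2 ^ r i)) : MemLp (haarTensor r a) ⊤ μ :=
  memLp_top_finset_prod fun i _ => memLp_top_of_bound
    ((measurable_haar _ _).comp (measurable_pi_apply i)).aestronglyMeasurable 1
    (ae_of_all _ fun _ => abs_haar_le_one _ _ _)

lemma dyadicI_subset_Ico_zero_one {j m : ℕ} (h : j < 2 ^ m) :
    dyadicI j (-(m : ℤ)) ⊆ Ico 0 1 := by
  have hj : (j : ℝ) + 1 ≤ 2 ^ m := by exact_mod_cast h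
  have hm : (2 : ℝ) ^ m * 2 ^ (-(m : ℤ)) = 1 := by
    rw [← zpow_natCast, ← zpow_add₀ two_ne_zero, add_neg_cancel, zpow_zero]
  rintro x ⟨h1, h2⟩
  push_cast at h1 h2
  have : (0 : ℝ) < 2 ^ (-(m : ℤ)) := by positivity
  exact ⟨le_trans (by positivity) h1, h2.trans_le (by nlinarith)⟩

lemma setIntegral_prod_haarTensor_eq_zero {ι : Type*} {d : ℕ} {T : Finset ι} (hT : T.Nonempty)
    {r : ι → Fin d → ℕ} (a : ∀ t i, Fin (2 ^ r t i)) (i₀ : Fin d)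
    (hr : InjOn (fun t => r t i₀) T) :
    ∫ x in univ.pi fun _ => Ico 0 1, ∏ t ∈ T, haarTensor (r t) (a t) x = 0 := by
  simp_rw [haarTensor, Finset.prod_comm (s := T)]
  rw [setIntegral_univ_pi_prod _ fun i y => ∏ t ∈ T, haar ((a t i : ℕ) : ℤ) (-(r t i : ℤ)) y]
  refine Finset.prod_eq_zero (Finset.mem_univ i₀) (setIntegral_prod_haar_eq_zero hT ?_
    fun t _ => dyadicI_subset_Ico_zero_one (a t i₀).is_lt)
  intro t ht t' ht' h
  exact hr ht ht' (by simpa using h)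

theorem stmt18_general (d n q : ℕ) (hd : 0 < d) (ρ : ℝ)
    (c : ℕ → ℕ) (hmono : ∀ t < q, c t < c (t + 1))
    (ε : ∀ r : Fin d → ℕ, (∀ t, Fin (2 ^ r t)) → ℝ)
    (F : ℕ → (Fin d → ℝ) → ℝ)
    (hF : ∀ t x, F t x =
      ∑ r ∈ (Hset d n).filter fun r => c t ≤ r ⟨0, hd⟩ ∧ r ⟨0, hd⟩ < c (t + 1),
        ∑ a : ∀ i, Fin (2 ^ r i),
          ε r a * ∏ i, haar ((a i : ℕ) : ℤ) (-(r i : ℤ)) (x i)) :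
    (∫ x in Set.univ.pi fun _ : Fin d => Set.Ico (0 : ℝ) 1,
      ∏ t ∈ Finset.range q, (1 + ρ * F t x)) = 1 := by
  set i₀ : Fin d := ⟨0, hd⟩
  -- `A t` indexes the terms `ε_R h_R` of `F t` by the pairs `(r, a)` describing `R`.
  let A (t : ℕ) : Finset (Σ r : Fin d → ℕ, ∀ i, Fin (2 ^ r i)) :=
    ((Hset d n).filter fun r => r i₀ ∈ Ico (c t) (c (t + 1))).sigma fun _ => Finset.univ
  let φ (p : Σ r : Fin d → ℕ, ∀ i, Fin (2 ^ r i)) : (Fin d → ℝ) → ℝ :=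
    fun x => ε p.1 p.2 * haarTensor p.1 p.2 x
  have hFA : ∀ t x, F t x = ∑ p ∈ A t, φ p x := fun t x => by
    rw [hF, Finset.sum_sigma]
    rfl
  have hφ : ∀ p, MemLp (φ p) ⊤ (volume.restrict (univ.pi fun _ => Ico 0 1)) :=
    fun p => (memLp_top_haarTensor p.1 p.2).const_mul _
  have hblock : ∀ t ∈ Finset.range q, ∀ t' ∈ Finset.range q, ∀ p ∈ A t, ∀ p' ∈ A t',
      p.1 i₀ = p'.1 i₀ → t = t' := by
    intro t ht t' ht' p hp p' hp' h
    simp only [A, Finset.mem_sigma, Finset.mem_filter] at hp hp'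
    exact ((strictMonoOn_Iic_of_lt_succ hmono).monotoneOn).eq_of_mem_Ico_succ
      (Finset.mem_range.1 ht) (Finset.mem_range.1 ht') hp.1.2 (h ▸ hp'.1.2)
  refine integral_prod_one_add_eq_one _ _ (fun t _ => ?_) fun T hT hTne => ?_
  · simp_rw [hFA]
    exact (memLp_finsetSum _ fun p _ => hφ p).const_mul ρ
  simp_rw [Finset.prod_mul_distrib, Finset.prod_const, hFA, ← Finset.prod_coe_sort T]
  rw [integral_const_mul, integral_prod_sum_eq_zero _ _ hφ, mul_zero]
  intro γ hγ
  simp_rw [φ, Finset.prod_mul_distrib]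
  rw [integral_const_mul, setIntegral_prod_haarTensor_eq_zero (Finset.univ_nonempty_iff.2
    hTne.to_subtype) (fun t => (γ t).2) i₀, mul_zero]
  intro t _ t' _ h
  exact Subtype.ext (hblock t (hT t.2) t' (hT t'.2) _ (Fintype.mem_piFinset.1 hγ t) _
    (Fintype.mem_piFinset.1 hγ t') h)

/-- Partition `{0,…,n}` into `q` intervals `I_t = [c t, c (t+1))`, let
`𝔸_t = {r ∈ ℍ_n : r₁ ∈ I_t}`, `F_t = Σ_{r ∈ 𝔸_t} f_r` with `f_r` r-functions, and
`Ψ = ∏_{t=1}^q (1 + ρ̃ F_t)`.  Then `∫_{[0,1]^d} Ψ = 1`. -/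
theorem stmt18 (d n q : ℕ) (hd : 0 < d) (hq : 0 < q) (ρ : ℝ) (hρ : 0 < ρ)
    (c : ℕ → ℕ) (hc0 : c 0 = 0) (hcq : c q = n + 1) (hmono : ∀ t < q, c t < c (t + 1))
    (ε : ∀ r : Fin d → ℕ, (∀ t, Fin (2 ^ r t)) → ℝ)
    (hε : ∀ r a, ε r a = 1 ∨ ε r a = -1)
    (F : ℕ → (Fin d → ℝ) → ℝ)
    (hF : ∀ t x, F t x =
      ∑ r ∈ (Hset d n).filter fun r => c t ≤ r ⟨0, hd⟩ ∧ r ⟨0, hd⟩ < c (t + 1),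
        ∑ a : ∀ i, Fin (2 ^ r i),
          ε r a * ∏ i, haar ((a i : ℕ) : ℤ) (-(r i : ℤ)) (x i)) :
    (∫ x in Set.univ.pi fun _ : Fin d => Set.Ico (0 : ℝ) 1,
      ∏ t ∈ Finset.range q, (1 + ρ * F t x)) = 1 :=
  stmt18_general d n q hd ρ c hmono ε F hF
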